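/- In speculative decoding, if token x drawn from distribution Q is accepted with probability min(1, P(x)/Q(x)), and upon rejection a new token is drawn from norm(max(0, P - Q)), then the resulting output token is distributed exactly according to P. -/

import Mathlib

open Finset

/-
The accepted mass at x is Q x · min 1 (P x / Q x) = min (Q x) (P x), so the rejection
probability is ∑ (P - min Q P) = ∑ max 0 (P - Q) =: S, which is exactly the normalizing constant
of the residual distribution. The output mass at x is therefore
min (Q x) (P x) + max 0 (P x - Q x) = P x; S > 0 because P ≠ Q have the same total mass.
-/

theorem mul_min_one_div_eq_min {K : Type*} [Field K] [LinearOrder K] [IsStrictOrderedRing K]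
    {a b : K} (ha : 0 ≤ a) (hb : 0 ≤ b) : b * min 1 (a / b) = min b a := by
  rcases hb.eq_or_lt with rfl | hb
  · simp [ha]
  · rw [mul_min_of_nonneg _ _ hb.le, mul_one, mul_div_cancel₀ _ hb.ne']

theorem min_add_max_zero_sub {α : Type*} [AddCommGroup α] [LinearOrder α] [IsOrderedAddMonoid α]
    (a b : α) : min b a + max 0 (a - b) = a := by
  rw [← eq_sub_iff_add_eq', ← max_sub_sub_left, sub_self, max_comm]

theorem sum_max_zero_sub_pos {ι α : Type*} [Fintype ι] [AddCommGroup α] [LinearOrder α]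
    [IsOrderedAddMonoid α] {f g : ι → α} (hsum : ∑ i, f i = ∑ i, g i) (hne : f ≠ g) :
    0 < ∑ i, max 0 (f i - g i) := by
  refine (sum_nonneg fun i _ ↦ le_max_left 0 _).lt_of_ne fun hzero ↦ hne ?_
  have hle : ∀ i, f i ≤ g i := fun i ↦ sub_nonpos.mp <| max_eq_left_iff.mp <|
    (sum_eq_zero_iff_of_nonneg fun i _ ↦ le_max_left 0 _).mp hzero.symm i (mem_univ i)
  funext i
  exact (sum_eq_sum_iff_of_le fun i _ ↦ hle i).mp hsum i (mem_univ i)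

/-- Speculative decoding correctness: accepting x ~ Q with probability
min(1, P(x)/Q(x)) and resampling upon rejection from norm(max(0, P - Q))
yields output distributed exactly as P. -/
theorem speculative_decoding_correct {V : Type*} [Fintype V]
    (P Q : V → ℝ) (hP0 : ∀ x, 0 ≤ P x) (hQ0 : ∀ x, 0 ≤ Q x)
    (hP1 : ∑ x, P x = 1) (hQ1 : ∑ x, Q x = 1) (hne : P ≠ Q) :
    ∀ x, Q x * min 1 (P x / Q x) +
      (1 - ∑ y, Q y * min 1 (P y / Q y)) *
        (max 0 (P x - Q x) / ∑ y, max 0 (P y - Q y)) = P x := by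
  have haccept : ∀ x, Q x * min 1 (P x / Q x) = min (Q x) (P x) :=
    fun x ↦ mul_min_one_div_eq_min (hP0 x) (hQ0 x)
  have hreject : 1 - ∑ y, min (Q y) (P y) = ∑ y, max 0 (P y - Q y) := by
    rw [sub_eq_iff_eq_add', ← sum_add_distrib, ← hP1]
    exact sum_congr rfl fun y _ ↦ (min_add_max_zero_sub (P y) (Q y)).symm
  have hpos : 0 < ∑ y, max 0 (P y - Q y) := sum_max_zero_sub_pos (hP1.trans hQ1.symm) hne
  intro x
  rw [haccept, sum_congr rfl fun y _ ↦ haccept y, hreject, mul_div_cancel₀ _ hpos.ne',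
    min_add_max_zero_sub]
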